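/- Values of the screened marginals and complement mass bound: The screened optimal solution satisfies μ^sc_i = κ μ_i for every i ∈ I, and Σ_{i ∉ I} μ^sc_i = Σ_{i ∉ I} (ε/κ) Σ_{j=1}^m K_{ij} e^{v^sc_j} ≤ (n − n_b)·( m_b·(max_{j∈J} ν_j)/(n κ K_min) + (m − m_b)·ε² ). -/

import Mathlib

open scoped Classical

open Real Finset Function

/-!
The screened optimum minimizes `Ψ_κ` in each coordinate separately. Moving `u i` to `u i + t`
changes `Ψ_κ` by `μsc i (eᵗ - 1) - κ μ i t`; for `i ∈ I` the lower bound is inactive, so `t = 0` is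
a local minimum and Fermat's rule gives `μsc i = κ μ i`. The same argument in `v` gives
`e^{v j} ∑ i, K i j e^{u i} = ν j / κ` for `j ∈ J`, and as `e^{u i} ≥ ε / κ` and `K ≥ Kmin` this
bounds `(ε / κ) e^{v j}` by `ν j / (n κ Kmin)`. Off `J` the screening fixes `e^{v j} = ε κ`, and
with `K ≤ 1` this bounds the mass of every screened row.
-/

lemma eq_of_isLocalMin_mul_exp_sub_mul {a b : ℝ}
    (h : IsLocalMin (fun t => a * exp t - b * t) 0) : a = b := by
  have hderiv : HasDerivAt (fun t => a * exp t - b * t) (a * exp 0 - b * 1) 0 :=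
    ((hasDerivAt_exp 0).const_mul a).sub ((hasDerivAt_id' 0).const_mul b)
  simpa [sub_eq_zero] using h.hasDerivAt_eq_zero hderiv

lemma sum_apply_update_sub {ι : Type*} [Fintype ι] (F : ι → ℝ → ℝ) (u : ι → ℝ) (i : ι)
    (x : ℝ) :
    ∑ k, F k (update u i x k) - ∑ k, F k (u k) = F i x - F i (u i) := by
  rw [← sum_sub_distrib, sum_eq_single i (fun k _ hk => by simp [hk]) (by simp)]
  simp

variable {ι ι' : Type*}

/-- The paper's `Ψ_κ`. -/
noncomputable def dualObjective [Fintype ι] [Fintype ι'] (K : ι → ι' → ℝ) (μ : ι → ℝ)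
    (ν : ι' → ℝ) (κ : ℝ) (u : ι → ℝ) (v : ι' → ℝ) : ℝ :=
  ∑ i, ∑ j, exp (u i) * K i j * exp (v j) - κ * ∑ i, u i * μ i - 1 / κ * ∑ j, v j * ν j

/-- One factor of the screened feasible set `F_sc`: `α = ε / κ` for `u`, `α = ε κ` for `v`. -/
def screenedSet (α : ℝ) (I : Finset ι) : Set (ι → ℝ) :=
  {u | (∀ i, α ≤ exp (u i)) ∧ ∀ i ∉ I, u i = log α}

lemma dualObjective_swap [Fintype ι] [Fintype ι'] (K : ι → ι' → ℝ) (μ : ι → ℝ) (ν : ι' → ℝ)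
    (κ : ℝ) (u : ι → ℝ) (v : ι' → ℝ) :
    dualObjective (swap K) ν μ κ⁻¹ v u = dualObjective K μ ν κ u v := by
  have hterm : ∀ i j, exp (v j) * swap K j i * exp (u i) = exp (u i) * K i j * exp (v j) :=
    fun i j => by rw [swap]; ring
  simp only [dualObjective, hterm, one_div, inv_inv]
  rw [sum_comm]
  ring

lemma dualObjective_update_left [Fintype ι] [Fintype ι'] (K : ι → ι' → ℝ) (μ : ι → ℝ)
    (ν : ι' → ℝ) (κ : ℝ) (u : ι → ℝ) (v : ι' → ℝ) (i : ι) (t : ℝ) :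
    dualObjective K μ ν κ (update u i (u i + t)) v =
      dualObjective K μ ν κ u v + exp (u i) * (∑ j, K i j * exp (v j)) * (exp t - 1)
        - κ * μ i * t := by
  have hexp := sum_apply_update_sub (fun k y => exp y * ∑ j, K k j * exp (v j)) u i (u i + t)
  have hlin := sum_apply_update_sub (fun k y => y * μ k) u i (u i + t)
  simp only [dualObjective, mul_assoc, ← mul_sum] at hexp hlin ⊢
  rw [exp_add] at hexp
  linear_combination hexp - κ * hlin

lemma update_mem_screenedSet {α : ℝ} (hα : 0 < α) {I : Finset ι} {u : ι → ℝ}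
    (hu : u ∈ screenedSet α I) {i : ι} (hi : i ∈ I) {x : ℝ} (hx : log α ≤ x) :
    update u i x ∈ screenedSet α I := by
  refine ⟨fun k => ?_, fun k hk => ?_⟩
  · rcases eq_or_ne k i with rfl | hki
    · simpa [exp_log hα] using exp_le_exp.2 hx
    · simpa [hki] using hu.1 k
  · simpa [(ne_of_mem_of_not_mem hi hk).symm] using hu.2 k hk

lemma exp_mul_sum_eq_of_isMinOn_left [Fintype ι] [Fintype ι'] {K : ι → ι' → ℝ} {μ : ι → ℝ}
    {ν : ι' → ℝ} {κ α : ℝ} {I : Finset ι} {u₀ : ι → ℝ} {v : ι' → ℝ}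
    (hα : 0 < α) (hu₀ : u₀ ∈ screenedSet α I)
    (hmin : IsMinOn (fun u => dualObjective K μ ν κ u v) (screenedSet α I) u₀)
    {i : ι} (hi : i ∈ I) (hactive : α < exp (u₀ i)) :
    exp (u₀ i) * ∑ j, K i j * exp (v j) = κ * μ i := by
  apply eq_of_isLocalMin_mul_exp_sub_mul
  have hlog : log α < u₀ i := (log_lt_iff_lt_exp hα).2 hactive
  filter_upwards [Ici_mem_nhds (show log α - u₀ i < 0 by linarith)] with t ht
  have hmem := update_mem_screenedSet hα hu₀ hi (x := u₀ i + t)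
    (by linarith [Set.mem_Ici.1 ht])
  have hle := isMinOn_iff.1 hmin _ hmem
  simp only [dualObjective_update_left] at hle
  simp only [exp_zero, mul_one, mul_zero, sub_zero]
  linarith

lemma exp_mul_sum_eq_of_isMinOn_right [Fintype ι] [Fintype ι'] {K : ι → ι' → ℝ} {μ : ι → ℝ}
    {ν : ι' → ℝ} {κ β : ℝ} {J : Finset ι'} {u : ι → ℝ} {v₀ : ι' → ℝ}
    (hβ : 0 < β) (hv₀ : v₀ ∈ screenedSet β J)
    (hmin : IsMinOn (fun v => dualObjective K μ ν κ u v) (screenedSet β J) v₀)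
    {j : ι'} (hj : j ∈ J) (hactive : β < exp (v₀ j)) :
    exp (v₀ j) * ∑ i, K i j * exp (u i) = κ⁻¹ * ν j :=
  exp_mul_sum_eq_of_isMinOn_left (K := swap K) hβ hv₀
    (by simpa only [dualObjective_swap] using hmin) hj hactive

lemma mul_exp_le_div_of_exp_mul_sum_eq [Fintype ι] [Nonempty ι] {K : ι → ι' → ℝ} {ν : ι' → ℝ}
    {u : ι → ℝ} {v : ι' → ℝ} {α κ Kmin : ℝ} {j : ι'} (hα : 0 ≤ α) (hu : ∀ i, α ≤ exp (u i))
    (hKmin : 0 < Kmin) (hK : ∀ i, Kmin ≤ K i j) (hκ : 0 < κ)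
    (hcol : exp (v j) * ∑ i, K i j * exp (u i) = κ⁻¹ * ν j) :
    α * exp (v j) ≤ ν j / (Fintype.card ι * κ * Kmin) := by
  have hsum : Fintype.card ι * (Kmin * α) ≤ ∑ i, K i j * exp (u i) := by
    simpa using card_nsmul_le_sum univ _ _
      fun i _ => mul_le_mul (hK i) (hu i) hα (hKmin.le.trans (hK i))
  rw [le_div_iff₀ (by positivity)]
  calc α * exp (v j) * (Fintype.card ι * κ * Kmin)
      = κ * (exp (v j) * (Fintype.card ι * (Kmin * α))) := by ring
    _ ≤ κ * (exp (v j) * ∑ i, K i j * exp (u i)) := by gcongr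
    _ = ν j := by rw [hcol]; field_simp

lemma mul_sum_mul_exp_le [Fintype ι'] {k v : ι' → ℝ} {α β B : ℝ} {J : Finset ι'}
    (hk : ∀ j, k j ≤ 1) (hα : 0 ≤ α) (hJ : ∀ j ∈ J, α * exp (v j) ≤ B)
    (hJc : ∀ j ∉ J, exp (v j) = β) :
    α * ∑ j, k j * exp (v j) ≤ #J * B + (Fintype.card ι' - #J) * (α * β) := by
  have hterm : ∀ j, α * (k j * exp (v j)) ≤ α * exp (v j) := fun j =>
    mul_le_mul_of_nonneg_left (mul_le_of_le_one_left (exp_pos _).le (hk j)) hα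
  have hcompl : ∑ j ∈ Jᶜ, α * exp (v j) = #Jᶜ * (α * β) := by
    rw [sum_congr rfl fun j hj => by rw [hJc j (mem_compl.1 hj)], sum_const, nsmul_eq_mul]
  calc α * ∑ j, k j * exp (v j) ≤ ∑ j, α * exp (v j) := by
        rw [mul_sum]; exact sum_le_sum fun j _ => hterm j
    _ = ∑ j ∈ J, α * exp (v j) + ∑ j ∈ Jᶜ, α * exp (v j) := (sum_add_sum_compl J _).symm
    _ ≤ #J * B + (Fintype.card ι' - #J) * (α * β) := by
        rw [hcompl, card_compl, Nat.cast_sub (card_le_univ J)]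
        gcongr
        simpa using sum_le_card_nsmul J _ B hJ

theorem screened_marginal_values_and_complement_mass_general
    (n m : ℕ) (hn : 0 < n)
    (C : Fin n → Fin m → ℝ) (hC : ∀ i j, 0 ≤ C i j)
    (η : ℝ) (hη : 0 < η)
    (K : Fin n → Fin m → ℝ) (hK : ∀ i j, K i j = Real.exp (-(C i j) / η))
    (μ : Fin n → ℝ) (ν : Fin m → ℝ)
    (ε κ : ℝ) (hε : 0 < ε) (hκ : 0 < κ)
    (I : Finset (Fin n))
    (J : Finset (Fin m))
    (Kmin : ℝ) (hKmin_le : ∀ i j, Kmin ≤ K i j) (hKmin_mem : ∃ i j, K i j = Kmin)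
    (usc : Fin n → ℝ) (vsc : Fin m → ℝ)
    (husc_feas : ∀ i, ε / κ ≤ Real.exp (usc i))
    (hvsc_feas : ∀ j, ε * κ ≤ Real.exp (vsc j))
    (husc_out : ∀ i ∉ I, usc i = Real.log (ε / κ))
    (hvsc_out : ∀ j ∉ J, vsc j = Real.log (ε * κ))
    (hsc_min : ∀ (u : Fin n → ℝ) (v : Fin m → ℝ),
      (∀ i, ε / κ ≤ Real.exp (u i)) → (∀ j, ε * κ ≤ Real.exp (v j)) →
      (∀ i ∉ I, u i = Real.log (ε / κ)) → (∀ j ∉ J, v j = Real.log (ε * κ)) →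
      (∑ i, ∑ j, Real.exp (usc i) * K i j * Real.exp (vsc j))
          - κ * (∑ i, usc i * μ i) - (1 / κ) * (∑ j, vsc j * ν j)
        ≤ (∑ i, ∑ j, Real.exp (u i) * K i j * Real.exp (v j))
          - κ * (∑ i, u i * μ i) - (1 / κ) * (∑ j, v j * ν j))
    (hactive_u : ∀ i ∈ I, ε / κ < Real.exp (usc i))
    (hactive_v : ∀ j ∈ J, ε * κ < Real.exp (vsc j))
    (μsc : Fin n → ℝ)
    (hμsc : ∀ i, μsc i = ∑ j, Real.exp (usc i) * K i j * Real.exp (vsc j))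
    (νmaxJ : ℝ)
    (hνmaxJ : (∃ j ∈ J, ν j = νmaxJ) ∧ ∀ j ∈ J, ν j ≤ νmaxJ) :
    (∀ i ∈ I, μsc i = κ * μ i) ∧
    (∑ i ∈ Iᶜ, μsc i = ∑ i ∈ Iᶜ, ε / κ * ∑ j, K i j * Real.exp (vsc j)) ∧
    ∑ i ∈ Iᶜ, μsc i ≤
      ((n : ℝ) - I.card) *
        ((J.card : ℝ) * νmaxJ / ((n : ℝ) * κ * Kmin) + ((m : ℝ) - J.card) * ε ^ 2) := by
  have hK_le_one : ∀ i j, K i j ≤ 1 := fun i j =>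
    (hK i j).symm ▸ exp_le_one_iff.2 (div_nonpos_of_nonpos_of_nonneg (neg_nonpos.2 (hC i j)) hη.le)
  have hKmin : 0 < Kmin := by obtain ⟨i, j, hij⟩ := hKmin_mem; exact hij ▸ (hK i j).symm ▸ exp_pos _
  have hα : 0 < ε / κ := by positivity
  have hmin_u : IsMinOn (dualObjective K μ ν κ · vsc) (screenedSet (ε / κ) I) usc :=
    isMinOn_iff.2 fun u hu => hsc_min u vsc hu.1 hvsc_feas hu.2 hvsc_out
  have hmin_v : IsMinOn (dualObjective K μ ν κ usc ·) (screenedSet (ε * κ) J) vsc :=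
    isMinOn_iff.2 fun v hv => hsc_min usc v husc_feas hv.1 husc_out hv.2
  have hrow : ∀ i, μsc i = exp (usc i) * ∑ j, K i j * exp (vsc j) := by
    simp_rw [hμsc, mul_sum, mul_assoc, implies_true]
  have hcompl : ∀ i ∈ Iᶜ, μsc i = ε / κ * ∑ j, K i j * exp (vsc j) := fun i hi => by
    rw [hrow, husc_out i (mem_compl.1 hi), exp_log hα]
  have hcol : ∀ j ∈ J, ε / κ * exp (vsc j) ≤ νmaxJ / (n * κ * Kmin) := fun j hj => by
    have : Nonempty (Fin n) := ⟨⟨0, hn⟩⟩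
    have hstat := exp_mul_sum_eq_of_isMinOn_right (by positivity) ⟨hvsc_feas, hvsc_out⟩ hmin_v
      hj (hactive_v j hj)
    calc ε / κ * exp (vsc j) ≤ ν j / (n * κ * Kmin) := by
          simpa using mul_exp_le_div_of_exp_mul_sum_eq hα.le husc_feas hKmin
            (fun i => hKmin_le i j) hκ hstat
      _ ≤ νmaxJ / (n * κ * Kmin) := by gcongr; exact hνmaxJ.2 j hj
  refine ⟨fun i hi => (hrow i).trans (exp_mul_sum_eq_of_isMinOn_left hα ⟨husc_feas, husc_out⟩
    hmin_u hi (hactive_u i hi)), sum_congr rfl hcompl, ?_⟩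
  calc ∑ i ∈ Iᶜ, μsc i
      ≤ ∑ i ∈ Iᶜ, (#J * (νmaxJ / (n * κ * Kmin)) + (m - #J) * (ε / κ * (ε * κ))) :=
        sum_le_sum fun i hi => (hcompl i hi).trans_le <| by
          simpa using mul_sum_mul_exp_le (hK_le_one i) hα.le hcol fun j hj => by
            rw [hvsc_out j hj, exp_log (by positivity)]
    _ = _ := by
        rw [sum_const, nsmul_eq_mul, card_compl, Nat.cast_sub (card_le_univ I)]
        simp only [Fintype.card_fin]
        field_simp

theorem screened_marginal_values_and_complement_mass
    (n m : ℕ) (hn : 0 < n) (hm : 0 < m)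
    (C : Fin n → Fin m → ℝ) (hC : ∀ i j, 0 ≤ C i j)
    (η : ℝ) (hη : 0 < η)
    (K : Fin n → Fin m → ℝ) (hK : ∀ i j, K i j = Real.exp (-(C i j) / η))
    (μ : Fin n → ℝ) (ν : Fin m → ℝ)
    (hμpos : ∀ i, 0 < μ i) (hνpos : ∀ j, 0 < ν j)
    (hμsum : ∑ i, μ i = 1) (hνsum : ∑ j, ν j = 1)
    (ε κ : ℝ) (hε : 0 < ε) (hκ : 0 < κ)
    (I : Finset (Fin n)) (hI : ∀ i, i ∈ I ↔ ε ^ 2 / κ * (∑ j, K i j) ≤ μ i)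
    (J : Finset (Fin m)) (hJ : ∀ j, j ∈ J ↔ κ * ε ^ 2 * (∑ i, K i j) ≤ ν j)
    (hIne : I.Nonempty) (hJne : J.Nonempty)
    (Kmin : ℝ) (hKmin_le : ∀ i j, Kmin ≤ K i j) (hKmin_mem : ∃ i j, K i j = Kmin)
    (usc : Fin n → ℝ) (vsc : Fin m → ℝ)
    (husc_feas : ∀ i, ε / κ ≤ Real.exp (usc i))
    (hvsc_feas : ∀ j, ε * κ ≤ Real.exp (vsc j))
    (husc_out : ∀ i ∉ I, usc i = Real.log (ε / κ))
    (hvsc_out : ∀ j ∉ J, vsc j = Real.log (ε * κ))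
    (hsc_min : ∀ (u : Fin n → ℝ) (v : Fin m → ℝ),
      (∀ i, ε / κ ≤ Real.exp (u i)) → (∀ j, ε * κ ≤ Real.exp (v j)) →
      (∀ i ∉ I, u i = Real.log (ε / κ)) → (∀ j ∉ J, v j = Real.log (ε * κ)) →
      (∑ i, ∑ j, Real.exp (usc i) * K i j * Real.exp (vsc j))
          - κ * (∑ i, usc i * μ i) - (1 / κ) * (∑ j, vsc j * ν j)
        ≤ (∑ i, ∑ j, Real.exp (u i) * K i j * Real.exp (v j))
          - κ * (∑ i, u i * μ i) - (1 / κ) * (∑ j, v j * ν j))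
    (hactive_u : ∀ i ∈ I, ε / κ < Real.exp (usc i))
    (hactive_v : ∀ j ∈ J, ε * κ < Real.exp (vsc j))
    (μsc : Fin n → ℝ)
    (hμsc : ∀ i, μsc i = ∑ j, Real.exp (usc i) * K i j * Real.exp (vsc j))
    (νmaxJ : ℝ)
    (hνmaxJ : (∃ j ∈ J, ν j = νmaxJ) ∧ ∀ j ∈ J, ν j ≤ νmaxJ) :
    (∀ i ∈ I, μsc i = κ * μ i) ∧
    (∑ i ∈ Iᶜ, μsc i = ∑ i ∈ Iᶜ, ε / κ * ∑ j, K i j * Real.exp (vsc j)) ∧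
    ∑ i ∈ Iᶜ, μsc i ≤
      ((n : ℝ) - I.card) *
        ((J.card : ℝ) * νmaxJ / ((n : ℝ) * κ * Kmin) + ((m : ℝ) - J.card) * ε ^ 2) :=
  screened_marginal_values_and_complement_mass_general n m hn C hC η hη K hK μ ν ε κ hε hκ I J Kmin
    hKmin_le hKmin_mem usc vsc husc_feas hvsc_feas husc_out hvsc_out hsc_min hactive_u hactive_v μsc
    hμsc νmaxJ hνmaxJ
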